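/- Let E be a real normed vector space, let Ω ⊆ E be open, and let F : Ω → E be such that every point of Ω has an open ball neighborhood contained in Ω on which F is Lipschitz with constant C ≥ 0. Then for every continuous path γ : [0,1] → Ω of finite length, ‖F(γ(1)) − F(γ(0))‖ ≤ C · (length of γ), where the length of γ is its total variation over [0,1]. -/

import Mathlib

/-!
The image of the path is compact, so a Lebesgue number of the cover by Lipschitz balls together
with uniform continuity of `γ` gives a mesh `η` such that `F` is `C`-Lipschitz between any two
points of the path whose times are `η`-close. Chaining along a partition of `[0, 1]` of mesh `η`
bounds `‖F (γ 1) - F (γ 0)‖` by `C` times a partition sum of `γ`, which is at most its variation.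
-/

open Set Metric
open scoped NNReal ENNReal

theorem exists_pos_edist_le_of_forall_lipschitzOnWith_ball {α β : Type*} [PseudoMetricSpace α]
    [PseudoEMetricSpace β] {F : α → β} {C : ℝ≥0} {K : Set α} (hK : IsCompact K)
    (hF : ∀ x ∈ K, ∃ r > 0, LipschitzOnWith C F (ball x r)) :
    ∃ δ > 0, ∀ x ∈ K, ∀ y, dist x y < δ → edist (F x) (F y) ≤ C * edist x y := by
  choose! r hr hlip using hF
  have hcover : K ⊆ ⋃ x : K, ball (x : α) (r x) := fun x hx =>
    mem_iUnion.2 ⟨⟨x, hx⟩, mem_ball_self (hr x hx)⟩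
  obtain ⟨δ, hδ, hsub⟩ := lebesgue_number_lemma_of_metric hK (fun _ => isOpen_ball) hcover
  refine ⟨δ, hδ, fun x hx y hxy => ?_⟩
  obtain ⟨z, hz⟩ := hsub x hx
  exact hlip z z.2 (hz (mem_ball_self hδ)) (hz (mem_ball'.2 hxy))

theorem edist_le_mul_eVariationOn_of_forall_dist_lt {α β : Type*} [PseudoEMetricSpace α]
    [PseudoEMetricSpace β] {φ : ℝ → β} {ψ : ℝ → α} {C : ℝ≥0} {a b η : ℝ} (hab : a ≤ b)
    (hη : 0 < η)
    (hloc : ∀ s ∈ Icc a b, ∀ t ∈ Icc a b, dist s t < η →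
      edist (φ s) (φ t) ≤ C * edist (ψ s) (ψ t)) :
    edist (φ a) (φ b) ≤ C * eVariationOn ψ (Icc a b) := by
  set h := η / 2
  set u : ℕ → ℝ := fun i => min (a + i * h) b
  set N := ⌈(b - a) / h⌉₊
  have hh : 0 < h := half_pos hη
  have hhη : h < η := half_lt_self hη
  have hu_mono : Monotone u := fun i j hij => min_le_min_right _ (by gcongr)
  have hu_mem : ∀ i, u i ∈ Icc a b := fun i =>
    ⟨le_min (le_add_of_nonneg_right (by positivity)) hab, min_le_right _ _⟩
  have hu_zero : u 0 = a := by simpa [u]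
  have hu_N : u N = b := by
    refine min_eq_right ?_
    have := Nat.le_ceil ((b - a) / h)
    rw [div_le_iff₀ hh] at this
    linarith
  have hu_step : ∀ i, dist (u i) (u (i + 1)) < η := by
    intro i
    rw [dist_comm, Real.dist_eq, abs_of_nonneg (sub_nonneg.2 (hu_mono i.le_succ))]
    have : u (i + 1) ≤ u i + h := by
      simp only [u, ← min_add_add_right]
      push_cast
      exact min_le_min (by linarith) (by linarith)
    linarith
  calc edist (φ a) (φ b) = edist (φ (u 0)) (φ (u N)) := by rw [hu_zero, hu_N]
    _ ≤ ∑ i ∈ Finset.range N, edist (φ (u i)) (φ (u (i + 1))) :=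
      edist_le_range_sum_edist (φ ∘ u) N
    _ ≤ ∑ i ∈ Finset.range N, C * edist (ψ (u (i + 1))) (ψ (u i)) :=
      Finset.sum_le_sum fun i _ => by
        rw [edist_comm (ψ _)]
        exact hloc _ (hu_mem i) _ (hu_mem (i + 1)) (hu_step i)
    _ ≤ C * eVariationOn ψ (Icc a b) := by
      rw [← Finset.mul_sum]
      exact mul_le_mul_right (eVariationOn.sum_le hu_mono hu_mem) _

theorem stmt_1_general
    {E : Type*} [NormedAddCommGroup E]
    (Ω : Set E)
    (F : E → E) (C : ℝ) (hC : 0 ≤ C)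
    (hLoc : ∀ x ∈ Ω, ∃ r > (0 : ℝ), Metric.ball x r ⊆ Ω ∧
        LipschitzOnWith C.toNNReal F (Metric.ball x r))
    (γ : ℝ → E)
    (hγcont : ContinuousOn γ (Set.Icc 0 1))
    (hγmem : ∀ t ∈ Set.Icc (0 : ℝ) 1, γ t ∈ Ω)
    (hγfin : eVariationOn γ (Set.Icc 0 1) < ⊤) :
    ‖F (γ 1) - F (γ 0)‖ ≤ C * (eVariationOn γ (Set.Icc 0 1)).toReal := by
  obtain ⟨δ, hδ, hFδ⟩ := exists_pos_edist_le_of_forall_lipschitzOnWith_ball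
    (isCompact_Icc.image_of_continuousOn hγcont) (F := F) (C := C.toNNReal) <| by
      rintro _ ⟨t, ht, rfl⟩
      obtain ⟨r, hr, -, hlip⟩ := hLoc _ (hγmem t ht)
      exact ⟨r, hr, hlip⟩
  obtain ⟨η, hη, hγη⟩ := Metric.uniformContinuousOn_iff.1
    (isCompact_Icc.uniformContinuousOn_of_continuous hγcont) δ hδ
  have hchain : edist (F (γ 0)) (F (γ 1)) ≤ C.toNNReal * eVariationOn γ (Icc 0 1) :=
    edist_le_mul_eVariationOn_of_forall_dist_lt zero_le_one hη fun s hs t ht hst =>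
      hFδ _ (mem_image_of_mem γ hs) _ (hγη s hs t ht hst)
  have := ENNReal.toReal_mono (ENNReal.mul_ne_top ENNReal.coe_ne_top hγfin.ne) hchain
  rwa [ENNReal.toReal_mul, ENNReal.coe_toReal, Real.coe_toNNReal C hC, ← dist_edist,
    dist_comm, dist_eq_norm] at this

/-- The chaining estimate: if every point of the open set `Ω` has an open ball neighborhood
contained in `Ω` on which `F` is Lipschitz with constant `C`, then for every continuous
finite-length path `γ` in `Ω`, `‖F (γ 1) − F (γ 0)‖ ≤ C · length γ`. -/
theorem stmt_1
    {E : Type*} [NormedAddCommGroup E] [NormedSpace ℝ E]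
    (Ω : Set E) (hΩopen : IsOpen Ω)
    (F : E → E) (C : ℝ) (hC : 0 ≤ C)
    (hLoc : ∀ x ∈ Ω, ∃ r > (0 : ℝ), Metric.ball x r ⊆ Ω ∧
        LipschitzOnWith C.toNNReal F (Metric.ball x r))
    (γ : ℝ → E)
    (hγcont : ContinuousOn γ (Set.Icc 0 1))
    (hγmem : ∀ t ∈ Set.Icc (0 : ℝ) 1, γ t ∈ Ω)
    (hγfin : eVariationOn γ (Set.Icc 0 1) < ⊤) :
    ‖F (γ 1) - F (γ 0)‖ ≤ C * (eVariationOn γ (Set.Icc 0 1)).toReal :=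
  stmt_1_general Ω F C hC hLoc γ hγcont hγmem hγfin
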